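/- arXiv:2305.16429 — 7 statements merged into one kernel-verified Lean document; each statement's English description precedes it below -/
import Mathlib

section
/- Let A be an associative K-algebra, n ≥ 2, and M̃, Y ∈ A such that d·M̃ Yⁿ⁻¹ M̃ = e·Yⁿ M̃ + a·M̃ Yⁿ, where e = 1 - d and a, d ∈ K with (d, a) ≠ (1, 0). Then for all k ≥ 1: d_k·M̃ Y^{kn-1} M̃ = e_k·Y^{kn} M̃ - a_k·M̃ Y^{kn}, where e_k = eᵏ, a_k = (-a)ᵏ, and d_k = d·∑_{j=0}^{k-1} e^j(-a)^{k-1-j}. -/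
/-!
Write the relation as `d • M Y^p M = e • Y^(p+1) M - b • M Y^(p+1)` (here `n = p + 1`, `b = -a`).
Two such relations, at exponents `p` and `q`, combine into one at exponent `p + q + 1`: expand
`M Y^p M Y^q M` once through each of them; the mixed terms `Y^(p+1) M Y^(q+1)` cancel. The
coefficients compose as `(d, e, b) ∘ (d', e', b') = (d e' + b d', e e', b b')`, so iterating
`k` times gives `(d ∑ eʲ bᵏ⁻¹⁻ʲ, eᵏ, bᵏ)`.
-/

open Finset

section

variable {R A : Type*} [CommRing R] [Ring A] [Algebra R A]

def SandwichRel (M Y : A) (d e b : R) (m : ℕ) : Prop :=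
  d • (M * Y ^ m * M) = e • (Y ^ (m + 1) * M) - b • (M * Y ^ (m + 1))

private lemma pow_mul_pow_mul (Y z : A) (i j : ℕ) : Y ^ i * (Y ^ j * z) = Y ^ (i + j) * z := by
  rw [← mul_assoc, ← pow_add]

namespace SandwichRel

variable {M Y : A} {d e b d' e' b' : R} {p q : ℕ}

theorem comp (H : SandwichRel M Y d e b p) (G : SandwichRel M Y d' e' b' q) :
    SandwichRel M Y (d * e' + b * d') (e * e') (b * b') (p + q + 1) := by
  unfold SandwichRel at *
  have h₁ := congrArg (fun x => d' • (x * (Y ^ q * M))) H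
  have h₂ := congrArg (fun x => d • (M * Y ^ p * x)) G
  have h₃ := congrArg (fun x => e • (Y ^ (p + 1) * x)) G
  have h₄ := congrArg (fun x => b' • (x * Y ^ (q + 1))) H
  simp only [smul_smul, mul_smul_comm, smul_mul_assoc, smul_sub, sub_mul, mul_sub, mul_assoc,
    pow_mul_pow_mul, ← pow_add] at h₁ h₂ h₃ h₄ ⊢
  ring_nf at h₁ h₂ h₃ h₄ ⊢
  linear_combination (norm := module) h₁ - h₂ + h₃ + h₄

theorem iterate (H : SandwichRel M Y d e b p) (k : ℕ) :
    SandwichRel M Y (d * ∑ i ∈ range (k + 1), e ^ i * b ^ (k - i)) (e ^ (k + 1)) (b ^ (k + 1))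
      (p + k * (p + 1)) := by
  induction k with
  | zero => simpa using H
  | succ k ih =>
    convert H.comp ih using 1
    · rw [geom_sum₂_succ_eq, Nat.add_sub_cancel]; ring
    · ring
    · ring
    · ring

end SandwichRel

end

theorem stmt9_general {K : Type*} [Field K] {A : Type*} [Ring A] [Algebra K A]
    (a d : K) (e : K)
    (n : ℕ) (hn : 2 ≤ n) (Mt Y : A)
    (hrel : d • (Mt * Y ^ (n - 1) * Mt) = e • (Y ^ n * Mt) + a • (Mt * Y ^ n)) :
    ∀ k : ℕ, 1 ≤ k →
      (d * ∑ j ∈ Finset.range k, e ^ j * (-a) ^ (k - 1 - j)) • (Mt * Y ^ (k * n - 1) * Mt)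
        = (e ^ k) • (Y ^ (k * n) * Mt) - ((-a) ^ k) • (Mt * Y ^ (k * n)) := by
  obtain ⟨p, rfl⟩ : ∃ p, n = p + 1 := ⟨n - 1, by omega⟩
  have H : SandwichRel Mt Y d e (-a) p := by
    rwa [SandwichRel, neg_smul, sub_neg_eq_add, ← Nat.add_sub_cancel p 1]
  intro k hk
  obtain ⟨k, rfl⟩ := Nat.exists_eq_add_of_le' hk
  have hexp : (k + 1) * (p + 1) = p + k * (p + 1) + 1 := by ring
  simpa only [SandwichRel, hexp, Nat.add_sub_cancel] using H.iterate k

theorem stmt9 {K : Type*} [Field K] {A : Type*} [Ring A] [Algebra K A]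
    (a d : K) (hda : (d, a) ≠ ((1 : K), (0 : K))) (e : K) (he : e = 1 - d)
    (n : ℕ) (hn : 2 ≤ n) (Mt Y : A)
    (hrel : d • (Mt * Y ^ (n - 1) * Mt) = e • (Y ^ n * Mt) + a • (Mt * Y ^ n)) :
    ∀ k : ℕ, 1 ≤ k →
      (d * ∑ j ∈ Finset.range k, e ^ j * (-a) ^ (k - 1 - j)) • (Mt * Y ^ (k * n - 1) * Mt)
        = (e ^ k) • (Y ^ (k * n) * Mt) - ((-a) ^ k) • (Mt * Y ^ (k * n)) :=
  stmt9_general a d e n hn Mt Y hrel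
end

section
/- Let n ≥ 2 and let (L₁, ..., L_{r₀}) be a finite sequence with L₁ = n, L_{j+1} - L_j ∈ {n, n+1}, which is quasi-balanced, i.e., L_r - 1 ≤ L_j + L_{r-j} ≤ L_r for all 0 < j < r ≤ r₀. Then at least one of the extended sequences (L₁, ..., L_{r₀}, L_{r₀} + n) and (L₁, ..., L_{r₀}, L_{r₀} + n + 1) is quasi-balanced. -/
/-- The finite sequence given by the first `r₀` terms of `L` is quasi-balanced:
`L r - L j - L (r - j) ∈ {0, 1}` for all `0 < j < r ≤ r₀`. -/
def QBUpTo (L : ℕ → ℕ) (r₀ : ℕ) : Prop :=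
  ∀ r j : ℕ, 0 < j → j < r → r ≤ r₀ →
    L r = L j + L (r - j) ∨ L r = L j + L (r - j) + 1

theorem stmt13 (n : ℕ) (hn : 2 ≤ n) (r₀ : ℕ) (hr₀ : 1 ≤ r₀) (L : ℕ → ℕ)
    (hL1 : L 1 = n)
    (hstep : ∀ j : ℕ, 1 ≤ j → j + 1 ≤ r₀ → L (j + 1) = L j + n ∨ L (j + 1) = L j + n + 1)
    (hqb : QBUpTo L r₀) :
    QBUpTo (Function.update L (r₀ + 1) (L r₀ + n)) (r₀ + 1) ∨
    QBUpTo (Function.update L (r₀ + 1) (L r₀ + n + 1)) (r₀ + 1) := by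
  -- auxiliary strict-case lemma
  have haux : ∀ a b : ℕ, 1 ≤ a → a < b → b ≤ r₀ →
      L a + L (r₀ + 1 - a) ≤ L b + L (r₀ + 1 - b) + 1 := by
    intro a b ha hab hb
    have h1 := hqb b a (by omega) hab hb
    have h2 := hqb (r₀ + 1 - a) (b - a) (by omega) (by omega) (by omega)
    have heq : r₀ + 1 - a - (b - a) = r₀ + 1 - b := by omega
    rw [heq] at h2
    have heq2 : b - a = b - a := rfl
    omega
  -- key lemma: any two "sums" differ by at most 1
  have hkey : ∀ a b : ℕ, 1 ≤ a → a ≤ r₀ → 1 ≤ b → b ≤ r₀ →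
      L a + L (r₀ + 1 - a) ≤ L b + L (r₀ + 1 - b) + 1 := by
    intro a b ha ha' hb hb'
    rcases lt_trichotomy a b with h | h | h
    · exact haux a b ha h hb'
    · subst h; omega
    · have := haux (r₀ + 1 - a) (r₀ + 1 - b) (by omega) (by omega) (by omega)
      have e1 : r₀ + 1 - (r₀ + 1 - a) = a := by omega
      have e2 : r₀ + 1 - (r₀ + 1 - b) = b := by omega
      rw [e1, e2] at this
      omega
  have hSr₀ : L r₀ + L (r₀ + 1 - r₀) = L r₀ + n := by
    have : r₀ + 1 - r₀ = 1 := by omega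
    rw [this, hL1]
  -- common part: QB for r ≤ r₀ and the generic new-index step
  have hbase : ∀ V : ℕ,
      (∀ j : ℕ, 0 < j → j < r₀ + 1 →
        V = L j + L (r₀ + 1 - j) ∨ V = L j + L (r₀ + 1 - j) + 1) →
      QBUpTo (Function.update L (r₀ + 1) V) (r₀ + 1) := by
    intro V hV r j hj hjr hr
    by_cases hrr : r = r₀ + 1
    · subst hrr
      rw [Function.update_self,
        Function.update_of_ne (by omega : j ≠ r₀ + 1),
        Function.update_of_ne (by omega : r₀ + 1 - j ≠ r₀ + 1)]
      exact hV j hj hjr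
    · rw [Function.update_of_ne (by omega : r ≠ r₀ + 1),
        Function.update_of_ne (by omega : j ≠ r₀ + 1),
        Function.update_of_ne (by omega : r - j ≠ r₀ + 1)]
      exact hqb r j hj hjr (by omega)
  by_cases hM : ∃ j : ℕ, 1 ≤ j ∧ j ≤ r₀ ∧ L j + L (r₀ + 1 - j) = L r₀ + n + 1
  · right
    obtain ⟨j₁, hj₁, hj₁', hj₁v⟩ := hM
    refine hbase _ ?_
    intro j hj hjr
    have h1 := hkey j r₀ (by omega) (by omega) hr₀ le_rfl
    have h2 := hkey j₁ j hj₁ hj₁' (by omega) (by omega)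
    omega
  · left
    refine hbase _ ?_
    intro j hj hjr
    have h1 := hkey j r₀ (by omega) (by omega) hr₀ le_rfl
    have h2 := hkey r₀ j hr₀ le_rfl (by omega) (by omega)
    have h3 : L j + L (r₀ + 1 - j) ≠ L r₀ + n + 1 := by
      intro hc
      exact hM ⟨j, by omega, by omega, hc⟩
    omega
end

section
/- Let n ≥ 2 and L ∈ Δ(n, n+1) (so L₁ = n and L_{j+1} - L_j ∈ {n, n+1}). If L is not quasi-balanced (i.e., there exist 0 < j < r with L_r - L_j - L_{r-j} ∉ {0,1}), then there exist k, r ∈ ℕ such that either (1) L_{k+r} = L_k + L_r - 1 and L_{r-1} + 2 < L_r, or (2) L_{k+r} = L_k + L_r + 2 and L_r + 2 < L_{r+1}. -/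
private lemma lemA (E : ℕ → ℤ) (hE : ∀ j, 1 ≤ j → E (j+1) = E j ∨ E (j+1) = E j + 1)
    (hE1 : E 1 = 0) :
    ∀ r k, 1 ≤ k → 1 ≤ r → E (k+r) - E k - E r ≤ -1 →
    ∃ r', 2 ≤ r' ∧ E (k+r') - E k - E r' = -1 ∧ E r' = E (r'-1) + 1 := by
  intro r
  induction r with
  | zero => intro k hk hr; omega
  | succ r ih =>
    intro k hk _ hD
    rcases Nat.eq_zero_or_pos r with h0 | hr1
    · exfalso
      subst h0
      have := hE k hk
      rw [hE1, (by omega : k + (0+1) = k + 1)] at hD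
      omega
    · by_cases hcase : E (k+r) - E k - E r ≤ -1
      · exact ih k hk hr1 hcase
      · push_neg at hcase
        have h2 := hE (k+r) (by omega)
        have h3 := hE r hr1
        have hidx : k + (r+1) = (k+r)+1 := by omega
        rw [hidx] at hD
        refine ⟨r+1, by omega, ?_, ?_⟩
        · rw [hidx]; omega
        · simp only [Nat.add_sub_cancel]; omega

private lemma lemB1 (E : ℕ → ℤ) (hE : ∀ j, 1 ≤ j → E (j+1) = E j ∨ E (j+1) = E j + 1)
    (hE1 : E 1 = 0) :
    ∀ r k, 1 ≤ k → 1 ≤ r → 2 ≤ E (k+r) - E k - E r →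
    ∃ r', 1 ≤ r' ∧ E (k+r') - E k - E r' = 2 := by
  intro r
  induction r with
  | zero => intro k hk hr; omega
  | succ r ih =>
    intro k hk _ hD
    rcases Nat.eq_zero_or_pos r with h0 | hr1
    · exfalso
      subst h0
      have := hE k hk
      rw [hE1, (by omega : k + (0+1) = k + 1)] at hD
      omega
    · by_cases hcase : 2 ≤ E (k+r) - E k - E r
      · exact ih k hk hr1 hcase
      · push_neg at hcase
        have h2 := hE (k+r) (by omega)
        have h3 := hE r hr1
        have hidx : k + (r+1) = (k+r)+1 := by omega
        rw [hidx] at hD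
        refine ⟨r+1, by omega, ?_⟩
        rw [hidx]; omega

private lemma lemB (E : ℕ → ℤ) (hE : ∀ j, 1 ≤ j → E (j+1) = E j ∨ E (j+1) = E j + 1)
    (hE1 : E 1 = 0) :
    ∀ k r, 1 ≤ k → 1 ≤ r → 2 ≤ E (k+r) - E k - E r →
    ∃ k' r', 1 ≤ k' ∧ 1 ≤ r' ∧ E (k'+r') - E k' - E r' = 2 ∧ E (r'+1) = E r' + 1 := by
  intro k
  induction k using Nat.strong_induction_on with
  | _ k ih =>
    intro r hk hr hD
    obtain ⟨r0, hr0, hDr0⟩ := lemB1 E hE hE1 r k hk hr hD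
    rcases hE r0 hr0 with hstep0 | hstep1
    · -- E (r0+1) = E r0, descend in k
      -- k = 1 is impossible
      have hk2 : 2 ≤ k := by
        rcases Nat.lt_or_ge k 2 with h | h
        · exfalso
          have hk1 : k = 1 := by omega
          subst hk1
          rw [(by omega : 1 + r0 = r0 + 1), hE1] at hDr0
          omega
        · exact h
      have hEk := hE (k-1) (by omega)
      rw [(by omega : k - 1 + 1 = k)] at hEk
      have hnew : 2 ≤ E ((k-1)+(r0+1)) - E (k-1) - E (r0+1) := by
        rw [(by omega : (k-1)+(r0+1) = k + r0), hstep0]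
        omega
      exact ih (k-1) (by omega) (r0+1) (by omega) (by omega) hnew
    · exact ⟨k, r0, hk, hr0, hDr0, hstep1⟩

theorem stmt14 (n : ℕ) (hn : 2 ≤ n) (L : ℕ → ℕ)
    (hL1 : L 1 = n)
    (hstep : ∀ j : ℕ, 1 ≤ j → L (j + 1) = L j + n ∨ L (j + 1) = L j + n + 1)
    (hnot : ∃ r j : ℕ, 0 < j ∧ j < r ∧
      ¬(L r = L j + L (r - j) ∨ L r = L j + L (r - j) + 1)) :
    ∃ k r : ℕ, 0 < k ∧ 0 < r ∧
      ((L (k + r) + 1 = L k + L r ∧ L (r - 1) + 2 < L r) ∨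
       (L (k + r) = L k + L r + 2 ∧ L r + 2 < L (r + 1))) := by
  set E : ℕ → ℤ := fun j => (L j : ℤ) - n * j with hEdef
  have hE1 : E 1 = 0 := by
    simp only [hEdef, hL1]
    push_cast
    ring
  have hE : ∀ j, 1 ≤ j → E (j+1) = E j ∨ E (j+1) = E j + 1 := by
    intro j hj
    rcases hstep j hj with h | h
    · left; simp only [hEdef, h]; push_cast; ring
    · right; simp only [hEdef, h]; push_cast; ring
  obtain ⟨r, j, hj0, hjr, hne⟩ := hnot
  set m := r - j with hm
  have hrm : j + m = r := by omega
  have hm1 : 1 ≤ m := by omega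
  have hcast : E (j+m) - E j - E m = (L r : ℤ) - L j - L m := by
    simp only [hEdef, hrm]
    have : (r : ℤ) = j + m := by exact_mod_cast hrm.symm
    rw [this]
    ring
  have hD : E (j+m) - E j - E m ≤ -1 ∨ 2 ≤ E (j+m) - E j - E m := by
    rw [hcast]; omega
  rcases hD with hD | hD
  · obtain ⟨r', hr2, hDeq, hstep'⟩ := lemA E hE hE1 m j hj0 hm1 hD
    have key : (L (j + r') : ℤ) = L j + L r' - 1 := by
      have h' := hDeq
      simp only [hEdef] at h'
      push_cast at h'
      linear_combination h'
    have key2 : (L r' : ℤ) = L (r'-1) + n + 1 := by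
      have h' := hstep'
      simp only [hEdef] at h'
      push_cast [Nat.cast_sub (by omega : 1 ≤ r')] at h'
      linear_combination h'
    exact ⟨j, r', hj0, by omega, Or.inl ⟨by omega, by omega⟩⟩
  · obtain ⟨k', r', hk', hr', hDeq, hstep'⟩ := lemB E hE hE1 j m hj0 hm1 hD
    have key : (L (k' + r') : ℤ) = L k' + L r' + 2 := by
      have h' := hDeq
      simp only [hEdef] at h'
      push_cast at h'
      linear_combination h'
    have key2 : (L (r'+1) : ℤ) = L r' + n + 1 := by
      have h' := hstep'
      simp only [hEdef] at h'
      push_cast at h'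
      linear_combination h'
    exact ⟨k', r', hk', by omega, Or.inr ⟨by omega, by omega⟩⟩
end

section
/- Let n ≥ 2, let L ∈ Δ(n,n+1) be quasi-balanced, and set |L| = {L_t : t ∈ ℕ}. Define n_i = a if i ∈ |L| and n_i = 0 otherwise (a ∈ K fixed). Then for all i ∈ ℕ₀ and r ∈ ℕ: n_i · n_{L_r + i + 1} + n_{i+1} · n_{L_r + i + 1} = a · n_{L_r + i + 1}. -/
theorem stmt15 {K : Type*} [Field K] (a : K) (n : ℕ) (hn : 2 ≤ n) (L : ℕ → ℕ)
    (hL1 : L 1 = n)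
    (hstep : ∀ j : ℕ, 1 ≤ j → L (j + 1) = L j + n ∨ L (j + 1) = L j + n + 1)
    (hqb : ∀ r j : ℕ, 0 < j → j < r →
      L r = L j + L (r - j) ∨ L r = L j + L (r - j) + 1)
    (ν : ℕ → K)
    (hν1 : ∀ i : ℕ, (∃ t : ℕ, 1 ≤ t ∧ L t = i) → ν i = a)
    (hν0 : ∀ i : ℕ, ¬(∃ t : ℕ, 1 ≤ t ∧ L t = i) → ν i = 0) :
    ∀ (i r : ℕ), 1 ≤ r →
      ν i * ν (L r + i + 1) + ν (i + 1) * ν (L r + i + 1) = a * ν (L r + i + 1) := by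
  have mono : ∀ s t : ℕ, 1 ≤ s → s < t → L s + n ≤ L t := by
    intro s t hs hst
    induction t with
    | zero => omega
    | succ t ih =>
      rcases Nat.lt_or_ge s t with h | h
      · have h1 := ih h
        have h2 := hstep t (by omega)
        omega
      · have hst' : s = t := by omega
        subst hst'
        have h2 := hstep s hs
        omega
  intro i r hr
  by_cases hX : ∃ t : ℕ, 1 ≤ t ∧ L t = L r + i + 1
  · obtain ⟨t, ht1, ht⟩ := hX
    have hXa : ν (L r + i + 1) = a := hν1 _ ⟨t, ht1, ht⟩
    have hrt : r < t := by
      by_contra h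
      push_neg at h
      rcases Nat.lt_or_ge t r with h' | h'
      · have := mono t r ht1 h'
        omega
      · have : t = r := by omega
        subst this
        omega
    have hq := hqb t r (by omega) hrt
    have htr1 : 1 ≤ t - r := by omega
    rcases hq with hq | hq
    · -- L (t - r) = i + 1
      have hLi1 : L (t - r) = i + 1 := by omega
      have hν2 : ν (i + 1) = a := hν1 _ ⟨t - r, htr1, hLi1⟩
      have hν3 : ν i = 0 := by
        apply hν0
        rintro ⟨s, hs1, hs⟩
        rcases Nat.lt_trichotomy s (t - r) with h | h | h
        · have := mono s (t - r) hs1 h; omega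
        · subst h; omega
        · have := mono (t - r) s htr1 h; omega
      rw [hν2, hν3, hXa]; ring
    · -- L (t - r) = i
      have hLi : L (t - r) = i := by omega
      have hν2 : ν i = a := hν1 _ ⟨t - r, htr1, hLi⟩
      have hν3 : ν (i + 1) = 0 := by
        apply hν0
        rintro ⟨s, hs1, hs⟩
        rcases Nat.lt_trichotomy s (t - r) with h | h | h
        · have := mono s (t - r) hs1 h; omega
        · subst h; omega
        · have := mono (t - r) s htr1 h; omega
      rw [hν2, hν3, hXa]; ring
  · rw [hν0 _ hX]; ring
end

section
/- Let n ≥ 2, L ∈ Δ(n,n+1) quasi-balanced, a ∈ K, and set n_i = a·[i ∈ {L_t : t ∈ ℕ}]. Then for all i ∈ ℕ₀ and r ∈ ℕ: a·∑_{j=0}^{L_r} n_{i+j} = r·a² + n_i·n_{L_r + i}. -/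
theorem stmt16 {K : Type*} [Field K] (a : K) (n : ℕ) (hn : 2 ≤ n) (L : ℕ → ℕ)
    (hL1 : L 1 = n)
    (hstep : ∀ j : ℕ, 1 ≤ j → L (j + 1) = L j + n ∨ L (j + 1) = L j + n + 1)
    (hqb : ∀ r j : ℕ, 0 < j → j < r →
      L r = L j + L (r - j) ∨ L r = L j + L (r - j) + 1)
    (ν : ℕ → K)
    (hν1 : ∀ i : ℕ, (∃ t : ℕ, 1 ≤ t ∧ L t = i) → ν i = a)
    (hν0 : ∀ i : ℕ, ¬(∃ t : ℕ, 1 ≤ t ∧ L t = i) → ν i = 0) :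
    ∀ (i r : ℕ), 1 ≤ r →
      a * ∑ j ∈ Finset.range (L r + 1), ν (i + j) = (r : K) * a ^ 2 + ν i * ν (L r + i) := by
  classical
  have hstep' : ∀ t, 1 ≤ t → L t + n ≤ L (t + 1) := by
    intro t ht; rcases hstep t ht with h | h <;> omega
  have hmono0 : ∀ t k, 1 ≤ t → L t ≤ L (t + k) := by
    intro t k ht
    induction k with
    | zero => exact le_rfl
    | succ v ih =>
      have h2 := hstep' (t + v) (by omega)
      show L t ≤ L (t + v + 1)
      omega
  have hmono : ∀ t u, 1 ≤ t → t ≤ u → L t ≤ L u := by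
    intro t u ht htu
    have h := hmono0 t (u - t) ht
    rw [show t + (u - t) = u by omega] at h
    exact h
  have hstrict : ∀ t u, 1 ≤ t → t < u → L t < L u := by
    intro t u ht htu
    have h1 := hstep' t ht
    have h2 := hmono (t + 1) u (by omega) (by omega)
    omega
  have hLn : ∀ r, 1 ≤ r → n ≤ L r := by
    intro r hr; have := hmono 1 r le_rfl hr; omega
  have hLt : ∀ t, t ≤ L t := by
    intro t
    induction t with
    | zero => omega
    | succ v ih =>
      rcases Nat.eq_zero_or_pos v with h | h
      · subst h; show 1 ≤ L 1; omega
      · have := hstep' v h; omega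
  have hνite : ∀ m, ν m = if (∃ t, 1 ≤ t ∧ L t = m) then a else 0 := by
    intro m; by_cases h : (∃ t, 1 ≤ t ∧ L t = m)
    · rw [if_pos h, hν1 m h]
    · rw [if_neg h, hν0 m h]
  intro i r hr
  have hex : ∃ t, 1 ≤ t ∧ i ≤ L t := ⟨i + 1, by omega, by have := hLt (i + 1); omega⟩
  have hsle : ∀ t, 1 ≤ t → i ≤ L t → Nat.find hex ≤ t := fun t h1 h2 => Nat.find_le ⟨h1, h2⟩
  have hsmin : ∀ t, t < Nat.find hex → ¬(1 ≤ t ∧ i ≤ L t) := fun t ht => Nat.find_min hex ht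
  obtain ⟨hs1, hsi⟩ := Nat.find_spec hex
  set s := Nat.find hex with hsdef
  -- upper bound : everything with index > s + r leaves the window
  have hub : i + L r < L (s + r + 1) := by
    have hsub : (s + r + 1) - s = r + 1 := by omega
    have h2 := hstep' r hr
    rcases hqb (s + r + 1) s (by omega) (by omega) with h | h <;> rw [hsub] at h <;> omega
  -- lower bound : index s + r - 1 is still in the window
  have hlb : L (s + r - 1) ≤ i + L r := by
    rcases Nat.eq_or_lt_of_le hs1 with h | h
    · have e : s + r - 1 = r := by omega
      rw [e]; omega
    · have hsm := hsmin (s - 1) (by omega)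
      have hL1i : L (s - 1) < i := by omega
      have hsub : (s + r - 1) - (s - 1) = r := by omega
      rcases hqb (s + r - 1) (s - 1) (by omega) (by omega) with hq | hq <;>
        rw [hsub] at hq <;> omega
  -- rewrite the sum as a multiple of a
  have hsum : ∑ j ∈ Finset.range (L r + 1), ν (i + j)
      = (((Finset.range (L r + 1)).filter (fun j => ∃ t, 1 ≤ t ∧ L t = i + j)).card : K) * a := by
    calc ∑ j ∈ Finset.range (L r + 1), ν (i + j)
        = ∑ j ∈ Finset.range (L r + 1), (if (∃ t, 1 ≤ t ∧ L t = i + j) then a else 0) :=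
          Finset.sum_congr rfl (fun j _ => hνite (i + j))
      _ = ∑ _j ∈ (Finset.range (L r + 1)).filter (fun j => ∃ t, 1 ≤ t ∧ L t = i + j), a :=
          (Finset.sum_filter _ _).symm
      _ = _ := by rw [Finset.sum_const, nsmul_eq_mul]
  -- identify the hit set with an image of an index set
  have key : ((Finset.range (L r + 1)).filter (fun j => ∃ t, 1 ≤ t ∧ L t = i + j))
      = ((Finset.Icc s (s + r)).filter (fun t => L t ≤ i + L r)).image (fun t => L t - i) := by
    ext j
    simp only [Finset.mem_filter, Finset.mem_range, Finset.mem_image, Finset.mem_Icc]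
    constructor
    · rintro ⟨hj, t, ht1, htj⟩
      refine ⟨t, ⟨⟨hsle t ht1 (by omega), ?_⟩, by omega⟩, by omega⟩
      by_contra hcon
      have := hmono (s + r + 1) t (by omega) (by omega)
      omega
    · rintro ⟨t, ⟨⟨hst, hts⟩, hLt'⟩, rfl⟩
      have h1 : i ≤ L t := le_trans hsi (hmono s t hs1 hst)
      exact ⟨by omega, t, by omega, by omega⟩
  have hinj : Set.InjOn (fun t => L t - i)
      ↑((Finset.Icc s (s + r)).filter (fun t => L t ≤ i + L r)) := by
    intro t ht t' ht' hE
    simp only [Finset.coe_filter, Finset.mem_Icc, Set.mem_setOf_eq] at ht ht'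
    have h1 : i ≤ L t := le_trans hsi (hmono s t hs1 ht.1.1)
    have h2 : i ≤ L t' := le_trans hsi (hmono s t' hs1 ht'.1.1)
    simp only at hE
    have hLL : L t = L t' := by omega
    rcases lt_trichotomy t t' with h | h | h
    · have := hstrict t t' (by omega) h; omega
    · exact h
    · have := hstrict t' t (by omega) h; omega
  have hcard : ((Finset.range (L r + 1)).filter (fun j => ∃ t, 1 ≤ t ∧ L t = i + j)).card
      = ((Finset.Icc s (s + r)).filter (fun t => L t ≤ i + L r)).card := by
    rw [key, Finset.card_image_of_injOn hinj]
  by_cases hA : L (s + r) ≤ i + L r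
  · -- both endpoints are L-values; count = r + 1
    have hsub : (s + r) - s = r := by omega
    have hqA := hqb (s + r) s (by omega) (by omega)
    rw [hsub] at hqA
    have hLs : L s = i := by rcases hqA with h | h <;> omega
    have hLsr : L (s + r) = i + L r := by rcases hqA with h | h <;> omega
    have hfull : ((Finset.Icc s (s + r)).filter (fun t => L t ≤ i + L r))
        = Finset.Icc s (s + r) := by
      apply Finset.filter_true_of_mem
      intro t ht
      simp only [Finset.mem_Icc] at ht
      have := hmono t (s + r) (by omega) ht.2
      omega
    have hcard2 : ((Finset.Icc s (s + r)).filter (fun t => L t ≤ i + L r)).card = r + 1 := by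
      rw [hfull, Nat.card_Icc]; omega
    have hνi : ν i = a := hν1 i ⟨s, hs1, hLs⟩
    have hνLr : ν (L r + i) = a := hν1 (L r + i) ⟨s + r, by omega, by omega⟩
    rw [hsum, hcard, hcard2, hνi, hνLr]
    push_cast
    ring
  · -- count = r, and the endpoint product vanishes
    have hIcc : ((Finset.Icc s (s + r)).filter (fun t => L t ≤ i + L r))
        = Finset.Icc s (s + r - 1) := by
      ext t
      simp only [Finset.mem_filter, Finset.mem_Icc]
      constructor
      · rintro ⟨⟨h1, h2⟩, h3⟩
        refine ⟨h1, ?_⟩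
        rcases Nat.eq_or_lt_of_le h2 with h | h
        · exfalso; rw [h] at h3; exact hA h3
        · omega
      · rintro ⟨h1, h2⟩
        have := hmono t (s + r - 1) (by omega) h2
        exact ⟨⟨h1, by omega⟩, by omega⟩
    have hcard2 : ((Finset.Icc s (s + r)).filter (fun t => L t ≤ i + L r)).card = r := by
      rw [hIcc, Nat.card_Icc]; omega
    have hprod : ν i * ν (L r + i) = 0 := by
      by_cases hVi : ∃ t, 1 ≤ t ∧ L t = i
      · obtain ⟨t₀, ht₀, he⟩ := hVi
        have hst₀ : s ≤ t₀ := hsle t₀ ht₀ (by omega)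
        have hLs : L s = i := by
          have := hmono s t₀ hs1 hst₀
          omega
        have hVLr : ¬(∃ t, 1 ≤ t ∧ L t = L r + i) := by
          rintro ⟨u, hu, heu⟩
          have hsu : s ≤ u := hsle u hu (by omega)
          have husr : u < s + r := by
            by_contra hcon
            have := hmono (s + r) u (by omega) (by omega)
            have hLrn := hLn r hr
            rcases hqb (s + r) s (by omega) (by omega) with h | h <;>
              rw [show (s + r) - s = r by omega] at h <;> omega
          rcases Nat.eq_or_lt_of_le hsu with h | h
          · -- u = s : L r = 0, impossible
            have := hLn r hr
            rw [← h] at heu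
            omega
          · -- s < u < s + r
            have hsub : u - s ≤ r - 1 := by omega
            have h1 : L (u - s) ≤ L (r - 1) := hmono (u - s) (r - 1) (by omega) hsub
            have h2 : L (r - 1) + n ≤ L r := by
              have := hstep' (r - 1) (by omega)
              rw [show (r - 1) + 1 = r by omega] at this
              exact this
            rcases hqb u s (by omega) h with hq | hq <;> omega
        rw [hν0 (L r + i) hVLr, mul_zero]
      · rw [hν0 i hVi, zero_mul]
    rw [hsum, hcard, hcard2, hprod]
    ring
end

section
/- Let n ≥ 2, L ∈ Δ(n,n+1) quasi-balanced, d ∈ K. Define m_i = 1 if i ≤ L₁ = n, and m_i = d^r if L_r < i ≤ L_{r+1}. If i = L_t for some t and k is not a value of L, then m_{i+k+1} = d·m_i·m_k. -/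
theorem stmt17 {K : Type*} [Field K] (d : K) (n : ℕ) (hn : 2 ≤ n) (L : ℕ → ℕ)
    (hL1 : L 1 = n)
    (hstep : ∀ j : ℕ, 1 ≤ j → L (j + 1) = L j + n ∨ L (j + 1) = L j + n + 1)
    (hqb : ∀ r j : ℕ, 0 < j → j < r →
      L r = L j + L (r - j) ∨ L r = L j + L (r - j) + 1)
    (μ : ℕ → K)
    (hμ1 : ∀ i : ℕ, i ≤ L 1 → μ i = 1)
    (hμd : ∀ r : ℕ, 1 ≤ r → ∀ i : ℕ, L r < i → i ≤ L (r + 1) → μ i = d ^ r) :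
    ∀ t : ℕ, 1 ≤ t → ∀ k : ℕ, ¬(∃ s : ℕ, 1 ≤ s ∧ L s = k) →
      μ (L t + k + 1) = d * μ (L t) * μ k := by
  intro t ht k hk
  have hmono : ∀ j, 1 ≤ j → L j + n ≤ L (j + 1) := by
    intro j hj; rcases hstep j hj with h | h <;> omega
  have hle : ∀ j, 1 ≤ j → j ≤ L j := by
    intro j hj
    induction j with
    | zero => omega
    | succ m ih =>
      rcases Nat.lt_or_ge 1 (m + 1) with h | h
      · have hm : 1 ≤ m := by omega
        have h1 := hmono m hm
        have h2 := ih hm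
        omega
      · have hm0 : m = 0 := by omega
        subst hm0
        have : L (0 + 1) = n := by norm_num [hL1]
        omega
  -- value of μ at L t
  have hμLt : μ (L t) = d ^ (t - 1) := by
    rcases Nat.eq_or_lt_of_le ht with h | h
    · rw [← h]
      simpa using hμ1 (L 1) le_rfl
    · have ht1 : 1 ≤ t - 1 := by omega
      have h1 := hmono (t - 1) ht1
      have heq : t - 1 + 1 = t := by omega
      rw [heq] at h1
      exact hμd (t - 1) ht1 (L t) (by omega) (by rw [heq])
  have hkn : k ≠ n := by
    intro h
    exact hk ⟨1, le_rfl, by rw [hL1, h]⟩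
  rcases Nat.lt_or_ge k n with hklt | hkge
  · -- k < n : μ k = 1, μ (L t + k + 1) = d ^ t
    have hμk : μ k = 1 := hμ1 k (by omega)
    have hbd := hmono t ht
    have hval : μ (L t + k + 1) = d ^ t :=
      hμd t ht (L t + k + 1) (by omega) (by omega)
    rw [hval, hμLt, hμk, mul_one, ← pow_succ']
    congr 1
    omega
  · -- n < k (since k ≠ n)
    have hkgt : n < k := by omega
    have hk1 : 1 ≤ k := by omega
    -- find s : L s < k < L (s+1)
    have hex : ∃ j, k ≤ L (j + 1) := by
      refine ⟨k - 1, ?_⟩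
      have := hle k hk1
      have : k - 1 + 1 = k := by omega
      rw [this]
      exact hle k hk1
    classical
    set s := Nat.find hex with hs
    have hub : k ≤ L (s + 1) := Nat.find_spec hex
    have hs1 : 1 ≤ s := by
      rcases Nat.eq_or_lt_of_le (Nat.zero_le s) with h | h
      · exfalso
        have hL01 : L (0 + 1) = n := by norm_num [hL1]
        rw [← h] at hub
        omega
      · omega
    have hlb : L s < k := by
      have := Nat.find_min hex (m := s - 1) (by omega)
      have heq : s - 1 + 1 = s := by omega
      rw [heq] at this
      omega
    have hub' : k < L (s + 1) := by
      rcases Nat.eq_or_lt_of_le hub with h | h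
      · exact absurd ⟨s + 1, by omega, h.symm⟩ hk
      · exact h
    have hμk : μ k = d ^ s := hμd s hs1 k hlb hub
    -- bounds on L (t + s) and L (t + s + 1)
    have hq1 := hqb (t + s) t (by omega) (by omega)
    have hq2 := hqb (t + s + 1) t (by omega) (by omega)
    have he1 : t + s - t = s := by omega
    have he2 : t + s + 1 - t = s + 1 := by omega
    rw [he1] at hq1
    rw [he2] at hq2
    have hlow : L (t + s) < L t + k + 1 := by omega
    have hhigh : L t + k + 1 ≤ L (t + s + 1) := by omega
    have hval : μ (L t + k + 1) = d ^ (t + s) :=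
      hμd (t + s) (by omega) (L t + k + 1) hlow hhigh
    rw [hval, hμLt, hμk, ← pow_succ', ← pow_add]
    congr 1
    omega
end

section
/- Let K be a field and b ∈ K. Define A_i = 1 + b + b² + ... + bⁱ for i ≥ 0 and the infinite matrix M over K by M_{0,j} = δ_{0,j}, M_{k,j} = bʲ·(∏_{i=0}^{k-1} A_i)/(∏_{i=0}^{j-1} A_i) for 1 ≤ j ≤ k (with ∏ over empty range = 1; assume all A_i ≠ 0), and M_{k,j} = 0 for j > k ≥ 1. Let Y be the shift matrix Y_{i,j} = δ_{i+1,j}. Then YM = M² + b·MY. -/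
/-- Product of infinite matrices whose left factor `A` satisfies `A i j = 0` for
`j > i + 1`, so that each entry of the product is a finite sum over `k ≤ i + 1`. -/
def bandMul {K : Type*} [Field K] (A B : ℕ → ℕ → K) : ℕ → ℕ → K :=
  fun i j => ∑ k ∈ Finset.range (i + 2), A i k * B k j

/-- The shift matrix `Y` with `Y i j = δ_{i+1, j}`. -/
def Ymat (K : Type*) [Field K] : ℕ → ℕ → K :=
  fun i j => if j = i + 1 then 1 else 0

/-- The matrix `M` with `M 0 j = δ_{0 j}`,
`M k j = b^j (∏_{i<k} A_i) / (∏_{i<j} A_i)` for `1 ≤ j ≤ k` (and `j = 0`), and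
`M k j = 0` for `j > k ≥ 1`, where `A i = 1 + b + ⋯ + bⁱ`. -/
noncomputable def Mmat {K : Type*} [Field K] (b : K) : ℕ → ℕ → K := fun k j =>
  if k = 0 then (if j = 0 then 1 else 0)
  else if j ≤ k then
    b ^ j * (∏ i ∈ Finset.range k, ∑ s ∈ Finset.range (i + 1), b ^ s)
      / (∏ i ∈ Finset.range j, ∑ s ∈ Finset.range (i + 1), b ^ s)
  else 0

noncomputable def Pb {K : Type*} [Field K] (b : K) (k : ℕ) : K :=
  ∏ i ∈ Finset.range k, ∑ s ∈ Finset.range (i + 1), b ^ s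

lemma M_eq {K : Type*} [Field K] (b : K) {k j : ℕ} (hk : k ≠ 0) (hj : j ≤ k) :
    Mmat b k j = b ^ j * Pb b k / Pb b j := by
  simp only [Mmat, Pb, if_neg hk, if_pos hj]

lemma M_gt {K : Type*} [Field K] (b : K) {k j : ℕ} (h : k < j) : Mmat b k j = 0 := by
  simp only [Mmat]
  split
  · rw [if_neg (by omega)]
  · rw [if_neg (by omega)]

theorem stmt19 {K : Type*} [Field K] (b : K)
    (hA : ∀ i : ℕ, (∑ s ∈ Finset.range (i + 1), b ^ s) ≠ 0) :
    ∀ i j : ℕ,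
      bandMul (Ymat K) (Mmat b) i j
        = bandMul (Mmat b) (Mmat b) i j + b * bandMul (Mmat b) (Ymat K) i j := by
  have hP : ∀ k : ℕ, Pb b k ≠ 0 := fun k =>
    Finset.prod_ne_zero_iff.mpr fun i _ => hA i
  intro i j
  have hYM : bandMul (Ymat K) (Mmat b) i j = Mmat b (i + 1) j := by
    simp only [bandMul, Ymat, ite_mul, one_mul, zero_mul, Finset.sum_ite_eq',
      Finset.mem_range]
    rw [if_pos (by omega)]
  have hMY : bandMul (Mmat b) (Ymat K) i j
      = if j = 0 then 0 else Mmat b i (j - 1) := by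
    simp only [bandMul, Ymat]
    rcases j with _ | j'
    · simp
    · simp only [Nat.succ_ne_zero, if_false, Nat.succ_sub_one, mul_ite, mul_one,
        mul_zero, add_left_inj, Finset.sum_ite_eq, Finset.mem_range]
      split
      · rfl
      · next h => rw [M_gt b (by omega)]
  rw [hYM, hMY]
  rcases Nat.eq_zero_or_pos i with hi | hi
  · subst hi
    simp only [bandMul]
    rw [Finset.sum_range_succ, Finset.sum_range_succ, Finset.sum_range_zero]
    rcases j with _ | _ | j
    · norm_num [Mmat]
    · norm_num [Mmat]
    · have e1 : Mmat b (0+1) (j+1+1) = 0 := M_gt b (by omega)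
      have e2 : Mmat b 0 (j+1+1) = 0 := M_gt b (by omega)
      have e3 : Mmat b 1 (j+1+1) = 0 := M_gt b (by omega)
      have e4 : Mmat b 0 (j+1+1-1) = 0 := M_gt b (by omega)
      have e5 : Mmat b 0 (j+1) = 0 := M_gt b (by omega)
      simp [e1, e2, e3, e4, e5]
  · have hi0 : i ≠ 0 := by omega
    by_cases hji : j ≤ i + 1
    · rcases j with _ | j'
      · -- j = 0
        rw [if_pos rfl, mul_zero, add_zero, bandMul]
        rw [Finset.sum_range_succ, M_gt b (show i < i + 1 by omega), zero_mul, add_zero]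
        have : ∀ k ∈ Finset.range (i + 1), Mmat b i k * Mmat b k 0
            = b ^ k * Pb b i := by
          intro k hk
          rw [Finset.mem_range] at hk
          rcases Nat.eq_zero_or_pos k with hk0 | hk0
          · subst hk0
            rw [M_eq b hi0 (by omega)]
            simp [Mmat, Pb]
          · rw [M_eq b hi0 (by omega), M_eq b (by omega) (by omega)]
            have h0 : Pb b 0 = 1 := by simp [Pb]
            rw [h0, pow_zero, one_mul, div_one, div_mul_cancel₀ _ (hP k)]
        rw [Finset.sum_congr rfl this, ← Finset.sum_mul]
        rw [M_eq b (by omega) (by omega)]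
        have h0 : Pb b 0 = 1 := by simp [Pb]
        rw [h0, Pb, Finset.prod_range_succ]
        rw [pow_zero, one_mul, div_one]
        rw [← Pb]
        ring
      · -- 1 ≤ j = j'+1 ≤ i+1
        set j := j' + 1 with hj
        have hj0 : j ≠ 0 := by omega
        rw [if_neg hj0]
        have key : ∀ k ∈ Finset.range (i + 2), Mmat b i k * Mmat b k j
            = if k ∈ Finset.Ico j (i + 1) then b ^ k * (b ^ j * Pb b i / Pb b j)
              else 0 := by
          intro k hk
          rw [Finset.mem_range] at hk
          by_cases hcond : k ∈ Finset.Ico j (i + 1)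
          · rw [if_pos hcond]
            rw [Finset.mem_Ico] at hcond
            rw [M_eq b hi0 (by omega), M_eq b (by omega) (by omega)]
            have h1 := hP i; have h2 := hP k; have h3 := hP j
            field_simp
          · rw [if_neg hcond, Finset.mem_Ico] at *
            push_neg at hcond
            by_cases hkj : j ≤ k
            · rw [M_gt b (by omega : i < k), zero_mul]
            · rw [M_gt b (by omega : k < j), mul_zero]
        rw [bandMul, Finset.sum_congr rfl key, Finset.sum_ite_mem,
          Finset.inter_eq_right.mpr (by
            intro x hx; rw [Finset.mem_Ico] at hx; rw [Finset.mem_range]; omega),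
          ← Finset.sum_mul]
        -- the b * M i j' term
        have hterm : b * Mmat b i j'
            = (∑ s ∈ Finset.range j, b ^ s) * (b ^ j * Pb b i / Pb b j) := by
          rw [M_eq b hi0 (by omega)]
          have hPj : Pb b j = Pb b j' * ∑ s ∈ Finset.range (j' + 1), b ^ s := by
            rw [Pb, hj, Finset.prod_range_succ, ← Pb]
          rw [hPj]
          have h1 := hP i; have h2 := hP j'
          have h3 := hA j'
          rw [hj]
          field_simp
          ring
        have hj1 : j - 1 = j' := by omega
        have hsum : (∑ k ∈ Finset.Ico j (i + 1), b ^ k) + (∑ s ∈ Finset.range j, b ^ s)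
            = ∑ s ∈ Finset.range (i + 1), b ^ s := by
          rw [add_comm (∑ k ∈ Finset.Ico j (i + 1), b ^ k)]
          exact Finset.sum_range_add_sum_Ico _ hji
        rw [hj1, hterm, ← add_mul, hsum]
        rw [M_eq b (by omega) (by omega)]
        rw [Pb, Finset.prod_range_succ, ← Pb]
        have h1 := hP i; have h3 := hP j
        field_simp
    · -- j > i + 1
      push_neg at hji
      rw [M_gt b (by omega), M_gt b (by omega), if_neg (by omega), mul_zero, add_zero]
      rw [bandMul]
      rw [Finset.sum_eq_zero]
      intro k hk
      rw [Finset.mem_range] at hk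
      rw [M_gt b (by omega : k < j), mul_zero]
end
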